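/- If Q = Z/p acts on G by automorphisms with trivial fixed subgroup G^Q = {e}, then the norm map induces an isomorphism H_*(BG/Q;Z) ≅ H_*^Q(G;Z). -/

import Mathlib

namespace IGC

noncomputable section
set_option linter.unusedSectionVars false

/-- The group of `n`-chains of the bar complex of `G` with coefficients in `A`
(trivial `G`-action): the free `A`-module on `n`-tuples of elements of `G`. -/
abbrev C (G : Type*) [Group G] (A : Type*) [AddCommGroup A] (n : ℕ) : Type _ :=
  (Fin n → G) →₀ A

/-- The `i`-th face of a bar symbol `[g_1|⋯|g_{n+1}]`. -/
def barFace {G : Type*} [Group G] {n : ℕ} (i : Fin (n + 2)) (g : Fin (n + 1) → G) :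
    Fin n → G := fun j =>
  if (j : ℕ) + 1 < (i : ℕ) then g j.castSucc
  else if (j : ℕ) + 1 = (i : ℕ) then g j.castSucc * g j.succ
  else g j.succ

/-- The boundary map of the bar complex. -/
def barD (G : Type*) [Group G] (A : Type*) [AddCommGroup A] (n : ℕ) :
    C G A (n + 1) →+ C G A n :=
  Finsupp.liftAddHom fun g =>
    { toFun := fun a => ∑ i : Fin (n + 2), Finsupp.single (barFace i g) (((-1 : ℤ) ^ (i : ℕ)) • a)
      map_zero' := by simp
      map_add' := fun a b => by
        simp [smul_add, Finsupp.single_add, Finset.sum_add_distrib] }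

lemma barD_single {G : Type*} [Group G] {A : Type*} [AddCommGroup A] (n : ℕ)
    (g : Fin (n + 1) → G) (a : A) :
    barD G A n (Finsupp.single g a) =
      ∑ i : Fin (n + 2), Finsupp.single (barFace i g) (((-1 : ℤ) ^ (i : ℕ)) • a) := by
  rw [barD, Finsupp.liftAddHom_apply_single]; rfl

/-- The boundary map out of degree `n` (the zero map for `n = 0`). -/
def barDFrom (G : Type*) [Group G] (A : Type*) [AddCommGroup A] :
    (n : ℕ) → C G A n →+ C G A (n - 1)
  | 0 => 0
  | n + 1 => barD G A n

/-- The chain map on bar complexes induced by a group homomorphism. -/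
def chainMapOf (G : Type*) [Group G] (A : Type*) [AddCommGroup A] {H : Type*} [Group H]
    (φ : H →* G) (n : ℕ) : C H A n →+ C G A n :=
  Finsupp.mapDomain.addMonoidHom fun g j => φ (g j)

lemma chainMapOf_single (G : Type*) [Group G] (A : Type*) [AddCommGroup A] {H : Type*} [Group H]
    (φ : H →* G) (n : ℕ) (g : Fin n → H) (a : A) :
    chainMapOf G A φ n (Finsupp.single g a) = Finsupp.single (fun j => φ (g j)) a := by
  rw [chainMapOf, Finsupp.mapDomain.addMonoidHom_apply, Finsupp.mapDomain_single]

lemma barFace_comp {G : Type*} [Group G] {H : Type*} [Group H] (φ : H →* G) {n : ℕ}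
    (i : Fin (n + 2)) (g : Fin (n + 1) → H) :
    (barFace i fun j => φ (g j)) = fun j => φ (barFace i g j) := by
  funext j
  unfold barFace
  split_ifs <;> simp

lemma chainMapOf_barD (G : Type*) [Group G] (A : Type*) [AddCommGroup A] {H : Type*} [Group H]
    (φ : H →* G) (n : ℕ) :
    (barD G A n).comp (chainMapOf G A φ (n + 1)) = (chainMapOf G A φ n).comp (barD H A n) := by
  apply Finsupp.addHom_ext
  intro g a
  rw [AddMonoidHom.comp_apply, AddMonoidHom.comp_apply, chainMapOf_single, barD_single,
    barD_single, map_sum]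
  refine Finset.sum_congr rfl fun i _ => ?_
  rw [chainMapOf_single, barFace_comp]

lemma chainMapOf_comp (G : Type*) [Group G] (A : Type*) [AddCommGroup A]
    {H K : Type*} [Group H] [Group K] (ψ : H →* G) (φ : K →* H) (n : ℕ) :
    (chainMapOf G A ψ n).comp (chainMapOf H A φ n) = chainMapOf G A (ψ.comp φ) n := by
  apply Finsupp.addHom_ext
  intro g a
  rw [AddMonoidHom.comp_apply, chainMapOf_single, chainMapOf_single, chainMapOf_single]
  rfl

section Action

variable (G : Type*) [Group G] (A : Type*) [AddCommGroup A]
variable (Q : Type*) [Group Q] [Fintype Q] [MulDistribMulAction Q G]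

/-- The action of `q : Q` on bar chains. -/
def qMap (q : Q) (n : ℕ) : C G A n →+ C G A n :=
  chainMapOf G A (MulDistribMulAction.toMonoidHom G q) n

/-- The subgroup of `Q`-fixed elements of `G`. -/
def fixedSubgroup : Subgroup G where
  carrier := {g | ∀ q : Q, q • g = g}
  one_mem' := fun q => smul_one q
  mul_mem' := fun ha hb q => by rw [smul_mul', ha q, hb q]
  inv_mem' := fun ha q => by rw [smul_inv', ha q]

/-- The subcomplex of `Q`-invariant bar chains. -/
def invC (n : ℕ) : AddSubgroup (C G A n) :=
  ⨅ q : Q, (qMap G A Q q n - AddMonoidHom.id (C G A n)).ker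

/-- Cycles of the bar complex. -/
def cycles (n : ℕ) : AddSubgroup (C G A n) := (barDFrom G A n).ker

/-- Boundaries of the bar complex. -/
def boundaries (n : ℕ) : AddSubgroup (C G A n) := (barD G A n).range

/-- The group homology `H_n(G;A)` (with trivial action on `A`), computed from the bar complex. -/
abbrev barHomology (n : ℕ) : Type _ :=
  cycles G A n ⧸ (boundaries G A n).addSubgroupOf (cycles G A n)

/-- `Q`-invariant cycles. -/
def invCycles (n : ℕ) : AddSubgroup (C G A n) := invC G A Q n ⊓ cycles G A n

/-- Boundaries of `Q`-invariant chains. -/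
def invBoundaries (n : ℕ) : AddSubgroup (C G A n) := (invC G A Q (n + 1)).map (barD G A n)

/-- `H_n^Q(G;A)`: the homology of the subcomplex of `Q`-invariant bar chains. -/
abbrev invHomology (n : ℕ) : Type _ :=
  invCycles G A Q n ⧸ (invBoundaries G A Q n).addSubgroupOf (invCycles G A Q n)

/-- The map `i_* : H_n^Q(G;A) → H_n(G;A)` induced by the inclusion of complexes. -/
def inclHom (n : ℕ) : invHomology G A Q n →+ barHomology G A n :=
  QuotientAddGroup.map _ _ (AddSubgroup.inclusion inf_le_right) (by
    intro x hx
    rw [AddSubgroup.mem_addSubgroupOf] at hx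
    rw [AddSubgroup.mem_comap, AddSubgroup.mem_addSubgroupOf]
    change (x : C G A n) ∈ boundaries G A n
    obtain ⟨y, -, hy⟩ := hx
    exact ⟨y, hy⟩)

/-- The subgroup `H_n(G;A)^Q` of `Q`-invariant homology classes. -/
def invariantClasses (n : ℕ) : AddSubgroup (barHomology G A n) :=
  ((⨅ q : Q, (boundaries G A n).comap (qMap G A Q q n - AddMonoidHom.id (C G A n))).addSubgroupOf
    (cycles G A n)).map
      (QuotientAddGroup.mk' ((boundaries G A n).addSubgroupOf (cycles G A n)))

lemma chainMapOf_fixed_mem_invC (n : ℕ) (c : C (fixedSubgroup G Q) A n) :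
    chainMapOf G A (fixedSubgroup G Q).subtype n c ∈ invC G A Q n := by
  have key : ∀ q : Q, (qMap G A Q q n).comp (chainMapOf G A (fixedSubgroup G Q).subtype n)
      = chainMapOf G A (fixedSubgroup G Q).subtype n := by
    intro q
    rw [qMap, chainMapOf_comp]
    congr 1
    ext x
    exact x.2 q
  rw [invC, AddSubgroup.mem_iInf]
  intro q
  rw [AddMonoidHom.mem_ker, AddMonoidHom.sub_apply, sub_eq_zero, AddMonoidHom.id_apply,
    ← AddMonoidHom.comp_apply, key q]


lemma chainMapOf_barDFrom (n : ℕ) (c : C (fixedSubgroup G Q) A n) :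
    barDFrom G A n (chainMapOf G A (fixedSubgroup G Q).subtype n c)
      = chainMapOf G A (fixedSubgroup G Q).subtype (n - 1)
          (barDFrom (fixedSubgroup G Q) A n c) := by
  match n with
  | 0 => simp [barDFrom]
  | n + 1 =>
      show (barD G A n) (chainMapOf G A (fixedSubgroup G Q).subtype (n + 1) c) = _
      rw [← AddMonoidHom.comp_apply, chainMapOf_barD]
      rfl

/-- The map `H_n(G^Q;A) → H_n^Q(G;A)` induced by the inclusion of complexes. -/
def subIncl (n : ℕ) : barHomology (fixedSubgroup G Q) A n →+ invHomology G A Q n :=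
  QuotientAddGroup.map _ _
    (((chainMapOf G A (fixedSubgroup G Q).subtype n).comp
        (cycles (fixedSubgroup G Q) A n).subtype).codRestrict (invCycles G A Q n) (by
      intro x
      rw [invCycles, AddSubgroup.mem_inf]
      refine ⟨chainMapOf_fixed_mem_invC G A Q n _, AddMonoidHom.mem_ker.mpr ?_⟩
      rw [AddMonoidHom.comp_apply, AddSubgroup.coe_subtype, chainMapOf_barDFrom,
        AddMonoidHom.mem_ker.mp x.2, map_zero]))
    (by
      intro x hx
      rw [AddSubgroup.mem_addSubgroupOf] at hx
      obtain ⟨σ, hσ⟩ := hx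
      rw [AddSubgroup.mem_comap, AddSubgroup.mem_addSubgroupOf]
      show ((chainMapOf G A (fixedSubgroup G Q).subtype n).comp
        (cycles (fixedSubgroup G Q) A n).subtype) x ∈ invBoundaries G A Q n
      rw [AddMonoidHom.comp_apply, AddSubgroup.coe_subtype, ← hσ, ← AddMonoidHom.comp_apply,
        ← chainMapOf_barD]
      exact ⟨chainMapOf G A (fixedSubgroup G Q).subtype (n + 1) σ,
        chainMapOf_fixed_mem_invC G A Q (n + 1) σ, rfl⟩)

/-- The subgroup generated by differences `q • c - c`, i.e. the kernel of the map
to the coinvariants (the cellular chains of the quotient space `BG/Q`). -/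
def W (n : ℕ) : AddSubgroup (C G A n) :=
  ⨆ q : Q, (qMap G A Q q n - AddMonoidHom.id (C G A n)).range

/-- Cycles of the coinvariants complex (the cellular chain complex of `BG/Q`),
presented as chains whose boundary lies in `W`. -/
def quotCycles (n : ℕ) : AddSubgroup (C G A n) := (W G A Q (n - 1)).comap (barDFrom G A n)

/-- Boundaries of the coinvariants complex, presented in `C_n(G;A)`. -/
def quotBoundaries (n : ℕ) : AddSubgroup (C G A n) := W G A Q n ⊔ (barD G A n).range

/-- `H_n(BG/Q;A)`: the homology of the coinvariants complex, i.e. of the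
cellular chain complex of the quotient CW-complex `BG/Q`. -/
abbrev quotHomology (n : ℕ) : Type _ :=
  quotCycles G A Q n ⧸ (quotBoundaries G A Q n).addSubgroupOf (quotCycles G A Q n)

/-- The image of the norm map `N : C_n(BG/Q) → C_n(G)^Q` sending the class of a
bar symbol to the sum over its `Q`-orbit. -/
def normImage (n : ℕ) : AddSubgroup (C G ℤ n) :=
  letI := Classical.decEq (Fin n → G)
  AddSubgroup.closure {c | ∃ g : Fin n → G,
    c = ∑ x ∈ Finset.image (fun q : Q => fun j => q • g j) Finset.univ, Finsupp.single x (1 : ℤ)}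

/-- The degree-`n` part of the cokernel `D_• = C_•(G)^Q / N(C_•(BG/Q))` of the norm map. -/
abbrev DChains (n : ℕ) : Type _ :=
  invC G ℤ Q n ⧸ (normImage G Q n).addSubgroupOf (invC G ℤ Q n)

/-- Cycles of the quotient complex `D_•`. -/
def DCycles (n : ℕ) : AddSubgroup (C G ℤ n) :=
  invC G ℤ Q n ⊓ (normImage G Q (n - 1)).comap (barDFrom G ℤ n)

/-- Boundaries of the quotient complex `D_•`. -/
def DBoundaries (n : ℕ) : AddSubgroup (C G ℤ n) :=
  normImage G Q n ⊔ (invC G ℤ Q (n + 1)).map (barD G ℤ n)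

/-- `h_n(D_•)`: the homology of the cokernel of the norm map. -/
abbrev DHomology (n : ℕ) : Type _ :=
  DCycles G Q n ⧸ (DBoundaries G Q n).addSubgroupOf (DCycles G Q n)

/-- Cellular cochains of `BG/Q` with `ℤ/2` coefficients: homomorphisms on chains. -/
abbrev Cochain (n : ℕ) : Type _ := C G ℤ n →+ ZMod 2

/-- Cochains vanishing on a subgroup of chains. -/
def vanishing (n : ℕ) (S : AddSubgroup (C G ℤ n)) : AddSubgroup (Cochain G n) where
  carrier := {f | ∀ c ∈ S, f c = 0}
  zero_mem' := fun c _ => rfl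
  add_mem' := fun hf hg c hc => by
    rw [AddMonoidHom.add_apply, hf c hc, hg c hc, add_zero]
  neg_mem' := fun hf c hc => by
    rw [AddMonoidHom.neg_apply, hf c hc, neg_zero]

/-- Precomposition with a boundary map as the coboundary operator. -/
def precomp {n m : ℕ} (d : C G ℤ m →+ C G ℤ n) : Cochain G n →+ Cochain G m :=
  AddMonoidHom.mk' (fun f => f.comp d) (fun f g => by ext c; simp)

/-- Cocycles of the `ℤ/2`-cochain complex of `BG/Q`. -/
def quotCocycles (q : ℕ) : AddSubgroup (Cochain G q) :=
  vanishing G q (W G ℤ Q q) ⊓ (precomp G (barD G ℤ q)).ker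

/-- Coboundaries of the `ℤ/2`-cochain complex of `BG/Q`. -/
def quotCoboundaries (q : ℕ) : AddSubgroup (Cochain G q) :=
  (vanishing G (q - 1) (W G ℤ Q (q - 1))).map (precomp G (barDFrom G ℤ q))

/-- `H^q(BG/Q; ℤ/2)`: the cellular cohomology of the quotient space with `ℤ/2` coefficients. -/
abbrev quotCohomology (q : ℕ) : Type _ :=
  quotCocycles G Q q ⧸ (quotCoboundaries G Q q).addSubgroupOf (quotCocycles G Q q)

end Action

/-- The action of `ℤˣ ≅ ℤ/2` on a commutative group by inversion (negation):
the nontrivial element acts by `g ↦ g⁻¹`. -/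
instance negAction (Γ : Type*) [CommGroup Γ] : MulDistribMulAction ℤˣ Γ where
  smul u g := g ^ (u : ℤ)
  one_smul g := by show g ^ ((1 : ℤˣ) : ℤ) = g; simp
  mul_smul u v g := by
    show g ^ ((↑(u * v) : ℤ)) = (g ^ (v : ℤ)) ^ (u : ℤ)
    rw [Units.val_mul, mul_comm, zpow_mul]
  smul_mul u a b := mul_zpow a b (u : ℤ)
  smul_one u := one_zpow _

end
end IGC

/-! The norm `N = ∑_{q ∈ Q} q` kills the differences `q • c - c`, so it maps the coinvariant
complex (cellular chains of `BG/Q`) to the invariant complex. Since `|Q| = p` is prime and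
`G^Q = 1`, every bar symbol other than `[1|⋯|1]` has trivial stabilizer. On such free orbits
an invariant chain is a norm and a chain of norm zero is a sum of differences, so `N` is
injective on coinvariants with cokernel `ℤ/p`, spanned in each degree by `[1|⋯|1]`. The boundary
of `[1|⋯|1]` is `[1|⋯|1]` or `0` according to parity, so the cokernel complex is acyclic in
positive degrees and `N` induces isomorphisms there; in degree `0` both homologies are the whole
group of `0`-chains. -/

namespace IGC

open Finsupp

noncomputable section

section Action

variable {G : Type*} [Group G] {A : Type*} [AddCommGroup A] {Q : Type*} [Group Q]
  [MulDistribMulAction Q G]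

lemma qMap_single (q : Q) {n : ℕ} (g : Fin n → G) (a : A) :
    qMap G A Q q n (single g a) = single (q • g) a :=
  chainMapOf_single G A _ n g a

lemma qMap_apply_smul (q : Q) {n : ℕ} (c : C G A n) (x : Fin n → G) :
    qMap G A Q q n c (q • x) = c x :=
  mapDomain_apply (MulAction.injective q) c x

lemma qMap_mul (q r : Q) (n : ℕ) :
    qMap G A Q (q * r) n = (qMap G A Q q n).comp (qMap G A Q r n) := by
  rw [qMap, qMap, qMap, chainMapOf_comp]
  congr 1
  ext x
  exact mul_smul q r x

lemma barD_qMap (q : Q) (n : ℕ) (c : C G A (n + 1)) :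
    barD G A n (qMap G A Q q (n + 1) c) = qMap G A Q q n (barD G A n c) := by
  rw [qMap, qMap, ← AddMonoidHom.comp_apply, chainMapOf_barD]
  rfl

lemma mem_invC_iff {n : ℕ} {c : C G A n} :
    c ∈ invC G A Q n ↔ ∀ q : Q, qMap G A Q q n c = c := by
  simp only [invC, AddSubgroup.mem_iInf, AddMonoidHom.mem_ker, AddMonoidHom.sub_apply,
    AddMonoidHom.id_apply, sub_eq_zero]

lemma apply_smul_of_mem_invC {n : ℕ} {c : C G A n} (hc : c ∈ invC G A Q n) (q : Q)
    (x : Fin n → G) : c (q • x) = c x :=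
  calc c (q • x) = qMap G A Q q n c (q • x) := by rw [mem_invC_iff.mp hc q]
    _ = c x := qMap_apply_smul q c x

lemma single_one_mem_invC (n : ℕ) (a : A) : single (1 : Fin n → G) a ∈ invC G A Q n :=
  mem_invC_iff.mpr fun q => by rw [qMap_single, smul_one]

lemma sub_mem_W (q : Q) {n : ℕ} (c : C G A n) : qMap G A Q q n c - c ∈ W G A Q n :=
  AddSubgroup.mem_iSup_of_mem q ⟨c, rfl⟩

lemma barFace_one {n : ℕ} (i : Fin (n + 2)) : barFace i (1 : Fin (n + 1) → G) = 1 := by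
  funext j
  unfold barFace
  split_ifs <;> simp

lemma barD_single_one (n : ℕ) (a : A) :
    barD G A n (single (1 : Fin (n + 1) → G) a) = if Even n then 0 else single 1 a := by
  simp only [barD_single, barFace_one, ← single_finsetSum, ← Finset.sum_smul,
    Fin.sum_univ_eq_sum_range (fun i => (-1 : ℤ) ^ i), neg_one_geom_sum, Nat.even_add,
    even_two, iff_true]
  split_ifs <;> simp

lemma barD_barD_single_one (n : ℕ) (a : A) :
    barD G A n (barD G A (n + 1) (single (1 : Fin (n + 2) → G) a)) = 0 := by
  rw [barD_single_one]
  split_ifs with h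
  · exact map_zero _
  · rw [barD_single_one, if_pos (by simpa [Nat.even_add_one] using h)]

end Action

section Norm

variable {G : Type*} [Group G] {A : Type*} [AddCommGroup A] {Q : Type*} [Group Q] [Fintype Q]
  [MulDistribMulAction Q G]

variable (G A Q) in
def chainNorm (n : ℕ) : C G A n →+ C G A n := ∑ q : Q, qMap G A Q q n

lemma chainNorm_apply {n : ℕ} (c : C G A n) : chainNorm G A Q n c = ∑ q : Q, qMap G A Q q n c :=
  AddMonoidHom.finsetSum_apply _ _ _

lemma chainNorm_apply_apply {n : ℕ} (c : C G A n) (y : Fin n → G) :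
    chainNorm G A Q n c y = ∑ q : Q, c (q • y) := by
  rw [chainNorm_apply, finsetSum_apply]
  refine Fintype.sum_equiv (Equiv.inv Q) _ _ fun q => ?_
  conv_lhs => rw [← smul_inv_smul q y]
  exact qMap_apply_smul q c _

lemma chainNorm_apply_one {n : ℕ} (c : C G A n) :
    chainNorm G A Q n c 1 = Fintype.card Q • c 1 := by
  simp [chainNorm_apply_apply, smul_one]

lemma chainNorm_single {n : ℕ} (x : Fin n → G) (a : A) :
    chainNorm G A Q n (single x a) = ∑ q : Q, single (q • x) a := by
  simp only [chainNorm_apply, qMap_single]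

lemma chainNorm_single_one {n : ℕ} (a : A) :
    chainNorm G A Q n (single 1 a) = single 1 (Fintype.card Q • a) := by
  simp [chainNorm_single, smul_one, ← smul_single]

lemma qMap_chainNorm (q : Q) {n : ℕ} (c : C G A n) :
    qMap G A Q q n (chainNorm G A Q n c) = chainNorm G A Q n c := by
  rw [chainNorm_apply, map_sum]
  exact Fintype.sum_equiv (Equiv.mulLeft q) _ _ fun r => by
    rw [Equiv.coe_mulLeft, qMap_mul]; rfl

lemma chainNorm_qMap (q : Q) {n : ℕ} (c : C G A n) :
    chainNorm G A Q n (qMap G A Q q n c) = chainNorm G A Q n c := by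
  rw [chainNorm_apply, chainNorm_apply]
  exact Fintype.sum_equiv (Equiv.mulRight q) _ _ fun r => by
    rw [Equiv.coe_mulRight, qMap_mul]; rfl

lemma chainNorm_mem_invC {n : ℕ} (c : C G A n) : chainNorm G A Q n c ∈ invC G A Q n :=
  mem_invC_iff.mpr fun q => qMap_chainNorm q c

lemma W_le_ker_chainNorm (n : ℕ) : W G A Q n ≤ (chainNorm G A Q n).ker :=
  iSup_le fun q => by
    rintro _ ⟨c, rfl⟩
    simp [chainNorm_qMap]

lemma barD_chainNorm {n : ℕ} (c : C G A (n + 1)) :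
    barD G A n (chainNorm G A Q (n + 1) c) = chainNorm G A Q n (barD G A n c) := by
  simp only [chainNorm_apply, map_sum, barD_qMap]

lemma chainNorm_mem_invCycles {n : ℕ} {c : C G A (n + 1)} (hc : c ∈ quotCycles G A Q (n + 1)) :
    chainNorm G A Q (n + 1) c ∈ invCycles G A Q (n + 1) :=
  ⟨chainNorm_mem_invC c, show barD G A n (chainNorm G A Q (n + 1) c) = 0 by
    rw [barD_chainNorm]
    exact W_le_ker_chainNorm n hc⟩

lemma chainNorm_mem_invBoundaries {n : ℕ} {c : C G A (n + 1)}
    (hc : c ∈ quotBoundaries G A Q (n + 1)) :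
    chainNorm G A Q (n + 1) c ∈ invBoundaries G A Q (n + 1) := by
  have hle : quotBoundaries G A Q (n + 1) ≤
      (invBoundaries G A Q (n + 1)).comap (chainNorm G A Q (n + 1)) := by
    refine sup_le (fun w hw => ?_) ?_
    · rw [AddSubgroup.mem_comap, W_le_ker_chainNorm _ hw]
      exact zero_mem _
    · rintro _ ⟨u, rfl⟩
      exact ⟨chainNorm G A Q (n + 2) u, chainNorm_mem_invC u, barD_chainNorm u⟩
  exact hle hc

variable (G A Q) in
def normHomology (n : ℕ) : quotHomology G A Q (n + 1) →+ invHomology G A Q (n + 1) :=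
  QuotientAddGroup.map _ _
    (((chainNorm G A Q (n + 1)).comp (quotCycles G A Q (n + 1)).subtype).codRestrict _
      fun c => chainNorm_mem_invCycles c.2)
    fun _ hc => by
      rw [AddSubgroup.mem_comap, AddSubgroup.mem_addSubgroupOf]
      exact chainNorm_mem_invBoundaries hc

end Norm

section Orbit

variable {G : Type*} [Group G] {A : Type*} [AddCommGroup A] {Q : Type*} [Group Q] [Fintype Q]
  [MulDistribMulAction Q G] {n : ℕ} {x : Fin n → G}

/-- When `x` has trivial stabilizer, `orbitChain x fun q => c (q • x)` is the restriction of `c`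
to the orbit of `x`. -/
def orbitChain (x : Fin n → G) (f : Q → A) : C G A n := ∑ q : Q, single (q • x) (f q)

lemma orbitChain_apply_smul (hx : MulAction.stabilizer Q x = ⊥) (f : Q → A) (q : Q) :
    orbitChain x f (q • x) = f q := by
  rw [orbitChain, finsetSum_apply, Finset.sum_eq_single q]
  · exact single_eq_same
  · intro r _ hrq
    refine single_eq_of_ne fun h => hrq ?_
    have hstab : q⁻¹ * r ∈ MulAction.stabilizer Q x := by
      rw [MulAction.mem_stabilizer_iff, mul_smul, ← h, inv_smul_smul]
    rw [hx, Subgroup.mem_bot, inv_mul_eq_one] at hstab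
    exact hstab.symm
  · exact fun h => absurd (Finset.mem_univ q) h

lemma orbitChain_apply_of_notMem {y : Fin n → G} (hy : y ∉ MulAction.orbit Q x) (f : Q → A) :
    orbitChain x f y = 0 := by
  rw [orbitChain, finsetSum_apply]
  exact Finset.sum_eq_zero fun q _ => single_eq_of_ne fun h => hy ⟨q, h.symm⟩

lemma orbitChain_sub_single_sum_mem_W (x : Fin n → G) (f : Q → A) :
    orbitChain x f - single x (∑ q, f q) ∈ W G A Q n := by
  rw [orbitChain, single_finsetSum, ← Finset.sum_sub_distrib]
  exact sum_mem fun q _ => by simpa only [qMap_single] using sub_mem_W q (single x (f q))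

lemma support_sub_orbitChain_ssubset (hx : MulAction.stabilizer Q x = ⊥) {c : C G A n}
    (hxc : x ∈ c.support) :
    (c - orbitChain x fun q : Q => c (q • x)).support ⊂ c.support := by
  refine Finset.ssubset_iff_of_subset (fun y hy => ?_) |>.mpr ⟨x, hxc, ?_⟩
  · rw [mem_support_iff, Finsupp.sub_apply] at hy
    by_cases hyx : y ∈ MulAction.orbit Q x
    · obtain ⟨q, rfl⟩ := hyx
      rw [orbitChain_apply_smul hx, sub_self] at hy
      exact absurd rfl hy
    · rwa [orbitChain_apply_of_notMem hyx, sub_zero, ← mem_support_iff] at hy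
  · rw [mem_support_iff, not_not, Finsupp.sub_apply]
    simpa using sub_eq_zero.mpr (orbitChain_apply_smul hx (fun q : Q => c (q • x)) 1).symm

lemma mem_of_forall_orbitChain_mem {S T : AddSubgroup (C G A n)}
    (hST : ∀ c ∈ T, ∀ x, MulAction.stabilizer Q x = ⊥ →
      (orbitChain x fun q : Q => c (q • x)) ∈ S ⊓ T)
    {c : C G A n} (hc : c ∈ T) (hfree : ∀ x ∈ c.support, MulAction.stabilizer Q x = ⊥) :
    c ∈ S := by
  induction hcard : c.support.card using Nat.strong_induction_on generalizing c with
  | _ k ih =>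
    rcases eq_or_ne c 0 with rfl | hc0
    · exact zero_mem S
    obtain ⟨x, hx⟩ := support_nonempty_iff.mpr hc0
    have horbit := hST c hc x (hfree x hx)
    have hsub := support_sub_orbitChain_ssubset (hfree x hx) hx
    have hrest := ih _ (hcard ▸ Finset.card_lt_card hsub) (sub_mem hc horbit.2)
      (fun y hy => hfree y (hsub.subset hy)) rfl
    simpa using add_mem hrest horbit.1

lemma mem_W_of_chainNorm_eq_zero_of_free {c : C G A n} (hc : chainNorm G A Q n c = 0)
    (hfree : ∀ x ∈ c.support, MulAction.stabilizer Q x = ⊥) : c ∈ W G A Q n := by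
  refine mem_of_forall_orbitChain_mem (T := (chainNorm G A Q n).ker) (fun c hc x _ => ?_) hc hfree
  have hsum : ∑ q : Q, c (q • x) = 0 := by
    rw [← chainNorm_apply_apply, AddMonoidHom.mem_ker.mp hc, Finsupp.zero_apply]
  have hW := orbitChain_sub_single_sum_mem_W x fun q : Q => c (q • x)
  rw [hsum, single_zero, sub_zero] at hW
  exact ⟨hW, W_le_ker_chainNorm n hW⟩

lemma mem_range_chainNorm_of_free {z : C G A n} (hz : z ∈ invC G A Q n)
    (hfree : ∀ x ∈ z.support, MulAction.stabilizer Q x = ⊥) :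
    z ∈ (chainNorm G A Q n).range := by
  refine mem_of_forall_orbitChain_mem (fun z hz x _ => ?_) hz hfree
  have hnorm : (orbitChain x fun q : Q => z (q • x)) = chainNorm G A Q n (single x (z x)) := by
    simp only [apply_smul_of_mem_invC hz, chainNorm_single, orbitChain]
  rw [hnorm]
  exact ⟨⟨_, rfl⟩, chainNorm_mem_invC _⟩

end Orbit

section PrimeOrder

variable {G : Type*} [Group G] {A : Type*} [AddCommGroup A] {Q : Type*} [Group Q] [Fintype Q]
  [MulDistribMulAction Q G] {p : ℕ} {n : ℕ}

lemma stabilizer_eq_bot_of_ne_one (hp : p.Prime) (hQ : Fintype.card Q = p)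
    (hfix : fixedSubgroup G Q = ⊥) {x : Fin n → G} (hx : x ≠ 1) :
    MulAction.stabilizer Q x = ⊥ := by
  have : Fact (Nat.card Q).Prime := ⟨by rwa [Nat.card_eq_fintype_card, hQ]⟩
  refine (Subgroup.eq_bot_or_eq_top_of_prime_card _).resolve_right fun htop => hx ?_
  funext j
  have hxj : x j ∈ fixedSubgroup G Q := fun q =>
    congr_fun (MulAction.mem_stabilizer_iff.mp (htop ▸ Subgroup.mem_top q)) j
  rwa [hfix, Subgroup.mem_bot] at hxj

lemma mem_W_of_chainNorm_eq_zero (hp : p.Prime) (hQ : Fintype.card Q = p)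
    (hfix : fixedSubgroup G Q = ⊥) {c : C G ℤ n} (hc : chainNorm G ℤ Q n c = 0) :
    c ∈ W G ℤ Q n := by
  have hc1 : c 1 = 0 := by
    have h := chainNorm_apply_one (Q := Q) c
    rw [hc, Finsupp.zero_apply] at h
    exact (smul_eq_zero.mp h.symm).resolve_left Fintype.card_ne_zero
  refine mem_W_of_chainNorm_eq_zero_of_free hc fun x hx => stabilizer_eq_bot_of_ne_one hp hQ hfix ?_
  rintro rfl
  exact mem_support_iff.mp hx hc1

lemma exists_eq_chainNorm_add_single_one (hp : p.Prime) (hQ : Fintype.card Q = p)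
    (hfix : fixedSubgroup G Q = ⊥) {z : C G A n} (hz : z ∈ invC G A Q n) :
    ∃ c a, z = chainNorm G A Q n c + single 1 a := by
  obtain ⟨c, hc⟩ := mem_range_chainNorm_of_free (sub_mem hz (single_one_mem_invC n (z 1)))
    fun x hx => stabilizer_eq_bot_of_ne_one hp hQ hfix fun h => by simp [h] at hx
  exact ⟨c, z 1, by rw [hc, sub_add_cancel]⟩

/-- The cokernel of the norm, spanned by `[1|⋯|1]`, has no homology in positive degrees. -/
lemma exists_eq_chainNorm_add_barD_single_one (hp : p.Prime) (hQ : Fintype.card Q = p)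
    (hfix : fixedSubgroup G Q = ⊥) {z : C G A (n + 1)} (hz : z ∈ invC G A Q (n + 1))
    (hdz : barD G A n z ∈ (chainNorm G A Q n).range) :
    ∃ c r, z = chainNorm G A Q (n + 1) c + barD G A (n + 1) (single 1 r) := by
  obtain ⟨c, a, rfl⟩ := exists_eq_chainNorm_add_single_one hp hQ hfix hz
  rcases Nat.even_or_odd n with hn | hn
  · refine ⟨c, a, ?_⟩
    rw [barD_single_one, if_neg (Nat.not_even_iff_odd.mpr hn.add_one)]
  · obtain ⟨u, hu⟩ := hdz
    have hsingle : chainNorm G A Q n (u - barD G A n c) = single 1 a := by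
      rw [map_sub, hu, map_add, barD_chainNorm, barD_single_one,
        if_neg (Nat.not_even_iff_odd.mpr hn), add_sub_cancel_left]
    refine ⟨c + single 1 ((u - barD G A n c) 1), 0, ?_⟩
    rw [single_zero, map_zero, add_zero, map_add, chainNorm_single_one, ← chainNorm_apply_one,
      hsingle, single_eq_same]

lemma mem_quotBoundaries_of_chainNorm_mem (hp : p.Prime) (hQ : Fintype.card Q = p)
    (hfix : fixedSubgroup G Q = ⊥) {c : C G ℤ (n + 1)}
    (hc : chainNorm G ℤ Q (n + 1) c ∈ invBoundaries G ℤ Q (n + 1)) :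
    c ∈ quotBoundaries G ℤ Q (n + 1) := by
  obtain ⟨u, hu, hdu⟩ := hc
  obtain ⟨v, r, rfl⟩ := exists_eq_chainNorm_add_barD_single_one hp hQ hfix hu ⟨c, hdu.symm⟩
  have hker : chainNorm G ℤ Q (n + 1) (c - barD G ℤ (n + 1) v) = 0 := by
    rw [map_sub, ← barD_chainNorm, ← hdu, map_add, barD_barD_single_one, add_zero, sub_self]
  rw [← sub_add_cancel c (barD G ℤ (n + 1) v)]
  exact add_mem (AddSubgroup.mem_sup_left (mem_W_of_chainNorm_eq_zero hp hQ hfix hker))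
    (AddSubgroup.mem_sup_right ⟨v, rfl⟩)

lemma exists_sub_chainNorm_mem_invBoundaries (hp : p.Prime) (hQ : Fintype.card Q = p)
    (hfix : fixedSubgroup G Q = ⊥) {z : C G ℤ (n + 1)} (hz : z ∈ invCycles G ℤ Q (n + 1)) :
    ∃ c ∈ quotCycles G ℤ Q (n + 1),
      z - chainNorm G ℤ Q (n + 1) c ∈ invBoundaries G ℤ Q (n + 1) := by
  obtain ⟨hzinv, hdz⟩ := hz
  replace hdz : barD G ℤ n z = 0 := hdz
  obtain ⟨c, r, rfl⟩ :=
    exists_eq_chainNorm_add_barD_single_one hp hQ hfix hzinv ⟨0, by rw [map_zero, hdz]⟩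
  refine ⟨c, mem_W_of_chainNorm_eq_zero hp hQ hfix ?_, single 1 r, single_one_mem_invC _ r, ?_⟩
  · rwa [map_add, barD_barD_single_one, add_zero, barD_chainNorm] at hdz
  · rw [add_sub_cancel_left]

lemma normHomology_injective (hp : p.Prime) (hQ : Fintype.card Q = p)
    (hfix : fixedSubgroup G Q = ⊥) (n : ℕ) : Function.Injective (normHomology G ℤ Q n) := by
  refine (injective_iff_map_eq_zero _).mpr fun x hx => ?_
  obtain ⟨c, rfl⟩ := QuotientAddGroup.mk_surjective x
  rw [normHomology, QuotientAddGroup.map_mk, QuotientAddGroup.eq_zero_iff] at hx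
  exact (QuotientAddGroup.eq_zero_iff _).mpr (mem_quotBoundaries_of_chainNorm_mem hp hQ hfix hx)

lemma normHomology_surjective (hp : p.Prime) (hQ : Fintype.card Q = p)
    (hfix : fixedSubgroup G Q = ⊥) (n : ℕ) : Function.Surjective (normHomology G ℤ Q n) := by
  intro x
  obtain ⟨z, rfl⟩ := QuotientAddGroup.mk_surjective x
  obtain ⟨c, hc, hzc⟩ := exists_sub_chainNorm_mem_invBoundaries hp hQ hfix z.2
  refine ⟨QuotientAddGroup.mk ⟨c, hc⟩, ?_⟩
  rw [normHomology, QuotientAddGroup.map_mk, QuotientAddGroup.eq, AddSubgroup.mem_addSubgroupOf]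
  simpa [neg_add_eq_sub] using hzc

end PrimeOrder

section DegreeZero

variable {G : Type*} [Group G] {A : Type*} [AddCommGroup A] {Q : Type*} [Group Q]
  [MulDistribMulAction Q G]

lemma qMap_zero (q : Q) : qMap G A Q q 0 = AddMonoidHom.id _ :=
  addHom_ext fun g a => by rw [qMap_single, Subsingleton.elim (q • g) g]; rfl

lemma barD_zero : barD G A 0 = 0 :=
  addHom_ext fun g a => by
    rw [barD_single, Fin.sum_univ_two, Subsingleton.elim (barFace 1 g) (barFace 0 g)]
    simp

lemma quotCycles_zero : quotCycles G A Q 0 = ⊤ :=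
  eq_top_iff.mpr fun _ _ => zero_mem (W G A Q 0)

lemma quotBoundaries_zero : quotBoundaries G A Q 0 = ⊥ := by
  simp [quotBoundaries, W, qMap_zero, barD_zero]

lemma invCycles_zero : invCycles G A Q 0 = ⊤ :=
  eq_top_iff.mpr fun _ _ => ⟨mem_invC_iff.mpr fun q => by rw [qMap_zero]; rfl, rfl⟩

lemma invBoundaries_zero : invBoundaries G A Q 0 = ⊥ := by
  rw [invBoundaries, barD_zero, AddSubgroup.map_zero_eq_bot]

def quotientAddSubgroupOfEquivOfEqTopOfEqBot {M : Type*} [AddCommGroup M] {S T : AddSubgroup M}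
    (hT : T = ⊤) (hS : S = ⊥) : T ⧸ S.addSubgroupOf T ≃+ M :=
  (QuotientAddGroup.quotientAddEquivOfEq (by rw [hS, AddSubgroup.bot_addSubgroupOf])).trans
    (QuotientAddGroup.quotientBot.trans ((AddEquiv.addSubgroupCongr hT).trans AddSubgroup.topEquiv))

variable (G A Q) in
def homologyZeroEquiv : quotHomology G A Q 0 ≃+ invHomology G A Q 0 :=
  (quotientAddSubgroupOfEquivOfEqTopOfEqBot quotCycles_zero quotBoundaries_zero).trans
    (quotientAddSubgroupOfEquivOfEqTopOfEqBot invCycles_zero invBoundaries_zero).symm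

end DegreeZero

end

end IGC

/-- if `Q = ℤ/p` acts on `G` with trivial fixed subgroup `G^Q = {e}`, then the
norm map induces an isomorphism `H_*(BG/Q;ℤ) ≅ H_*^Q(G;ℤ)`. -/
theorem stmt7 (G : Type*) [Group G] (Q : Type*) [Group Q] [Fintype Q]
    [MulDistribMulAction Q G] (p : ℕ) (hp : p.Prime) (hQ : Fintype.card Q = p)
    (hfix : IGC.fixedSubgroup G Q = ⊥) (n : ℕ) :
    Nonempty (IGC.quotHomology G ℤ Q n ≃+ IGC.invHomology G ℤ Q n) := by
  cases n with
  | zero => exact ⟨IGC.homologyZeroEquiv G ℤ Q⟩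
  | succ n =>
    exact ⟨AddEquiv.ofBijective (IGC.normHomology G ℤ Q n)
      ⟨IGC.normHomology_injective hp hQ hfix n, IGC.normHomology_surjective hp hQ hfix n⟩⟩
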